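/- For all s, s′ ∈ ℂ^N_𝒱 such that every entry of F·s − F·s′ is a Gaussian integer, one has s_n = s′_n for all n ∈ {1,…,N−1} (i.e., s_{1:N−1} can be uniquely recovered from the modulo measurements) if and only if every monic irreducible factor of X^N − 1 in ℚ(i)[X] other than X − 1 has a root of the form exp(2πi·n/N) with n ∈ 𝒱. -/

import Mathlib

/-! Write `ζ = exp(2πi/N)`. Up to the factor `√N`, the inverse DFT of a vector `g` is the
vector of values `g(ζⁿ)` of the polynomial `∑ gₘ Xᵐ`. As a vector of Gaussian rationals becomes
a vector of Gaussian integers after multiplication by a positive integer, recoverability says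
that every `p ∈ ℚ(i)[X]` of degree `< N` vanishing at all `ζᵛ`, `v ∈ 𝒱`, vanishes at every
`ζⁿ ≠ 1`. If each irreducible factor `c ≠ X - 1` of `X^N - 1` has a root `ζᵛ`, then `c`, being
the minimal polynomial of each of its roots, divides such a `p`; so `p` vanishes at every root of
`X^N - 1` other than `1`. Conversely, if some `c` has no such root, the cofactor `(X^N - 1) / c`
vanishes at all `ζᵛ` but, `X^N - 1` being separable, not at the roots of `c`, one of which is
`ζᵏ` with `k ≠ 0`. -/

open Polynomial IntermediateField

noncomputable def dft (N : ℕ) : Matrix (Fin N) (Fin N) ℂ :=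
  Matrix.of fun n₁ n₂ : Fin N => (1 / Real.sqrt N : ℂ) *
    Complex.exp (-(2 * Real.pi * Complex.I * (n₁ : ℕ) * (n₂ : ℕ)) / N)

/-- A complex number is a Gaussian integer if its real and imaginary parts are integers. -/
def IsGaussianInt (z : ℂ) : Prop := ∃ a b : ℤ, z = (a : ℂ) + (b : ℂ) * Complex.I

/-- Identifiability of the modulo-DFT sensing model on `ℂ^N_𝒱`: any two signals
supported off `𝒱` whose DFT images differ by a Gaussian integer vector coincide. -/
def ModuloDFTIdentifiable (N : ℕ) (V : Set ℕ) : Prop :=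
  ∀ s s' : Fin N → ℂ,
    (∀ n : Fin N, (n : ℕ) ∈ V → s n = 0) →
    (∀ n : Fin N, (n : ℕ) ∈ V → s' n = 0) →
    (∀ m : Fin N, IsGaussianInt ((dft N).mulVec s m - (dft N).mulVec s' m)) →
    s = s'

open Matrix

noncomputable def dftRoot (N : ℕ) : ℂ := Complex.exp (2 * Real.pi * Complex.I / N)

lemma isPrimitiveRoot_dftRoot {N : ℕ} (hN : N ≠ 0) : IsPrimitiveRoot (dftRoot N) N :=
  Complex.isPrimitiveRoot_exp N hN

lemma dftRoot_pow (N k : ℕ) :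
    dftRoot N ^ k = Complex.exp (2 * Real.pi * Complex.I * k / N) := by
  rw [dftRoot, ← Complex.exp_nat_mul]
  ring_nf

noncomputable def idft (N : ℕ) : Matrix (Fin N) (Fin N) ℂ :=
  Matrix.of fun n m : Fin N => (Real.sqrt N : ℂ)⁻¹ * dftRoot N ^ ((n : ℕ) * m)

lemma dft_apply (N : ℕ) (n m : Fin N) :
    dft N n m = (Real.sqrt N : ℂ)⁻¹ * (dftRoot N ^ ((n : ℕ) * m))⁻¹ := by
  rw [dft, Matrix.of_apply, one_div, dftRoot_pow, ← Complex.exp_neg]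
  push_cast
  ring_nf

lemma geom_sum_eq_zero_of_pow_eq_one {K : Type*} [Field K] {u : K} {N : ℕ} (hu : u ^ N = 1)
    (hu1 : u ≠ 1) : ∑ m ∈ Finset.range N, u ^ m = 0 := by
  rw [geom_sum_eq hu1, hu, sub_self, zero_div]

lemma dft_mul_idft {N : ℕ} (hN : N ≠ 0) : dft N * idft N = 1 := by
  have hζ := isPrimitiveRoot_dftRoot hN
  have hζ0 : dftRoot N ≠ 0 := hζ.ne_zero hN
  have hsqrt : (Real.sqrt N : ℂ)⁻¹ * (Real.sqrt N : ℂ)⁻¹ = (N : ℂ)⁻¹ := by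
    rw [← mul_inv, ← Complex.ofReal_mul, Real.mul_self_sqrt (Nat.cast_nonneg N)]
    push_cast
    rfl
  ext j k
  set u := dftRoot N ^ (k : ℕ) * (dftRoot N ^ (j : ℕ))⁻¹
  have hterm : ∀ m : ℕ, (dftRoot N ^ ((j : ℕ) * m))⁻¹ * dftRoot N ^ (m * (k : ℕ)) = u ^ m := by
    intro m
    rw [mul_pow, inv_pow, ← pow_mul, ← pow_mul, mul_comm (k : ℕ), mul_comm]
  calc (dft N * idft N) j k
      = (N : ℂ)⁻¹ * ∑ m ∈ Finset.range N, u ^ m := by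
        simp only [Matrix.mul_apply, dft_apply, idft, Matrix.of_apply, Finset.mul_sum]
        rw [← Fin.sum_univ_eq_sum_range]
        refine Finset.sum_congr rfl fun m _ => ?_
        rw [← hterm, ← hsqrt]
        ring
    _ = (1 : Matrix (Fin N) (Fin N) ℂ) j k := by
        rw [Matrix.one_apply]
        split_ifs with hjk
        · subst hjk
          simp [u, hζ0, hN]
        · have hu1 : u ≠ 1 := fun h => hjk <| Fin.ext <| hζ.pow_inj j.isLt k.isLt <|
            ((mul_inv_eq_one₀ (pow_ne_zero _ hζ0)).1 h).symm
          have huN : u ^ N = 1 := by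
            rw [mul_pow, inv_pow, pow_right_comm, pow_right_comm _ (j : ℕ), hζ.pow_eq_one,
              one_pow, one_pow, inv_one, mul_one]
          rw [geom_sum_eq_zero_of_pow_eq_one huN hu1, mul_zero]

lemma idft_mul_dft {N : ℕ} (hN : N ≠ 0) : idft N * dft N = 1 :=
  mul_eq_one_comm.1 (dft_mul_idft hN)

lemma idft_mulVec_dft_mulVec {N : ℕ} (hN : N ≠ 0) (d : Fin N → ℂ) :
    idft N *ᵥ (dft N *ᵥ d) = d := by
  rw [mulVec_mulVec, idft_mul_dft hN, one_mulVec]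

lemma dft_mulVec_idft_mulVec {N : ℕ} (hN : N ≠ 0) (d : Fin N → ℂ) :
    dft N *ᵥ (idft N *ᵥ d) = d := by
  rw [mulVec_mulVec, dft_mul_idft hN, one_mulVec]

lemma aeval_dftRoot_pow_eq {K : Type*} [CommSemiring K] [Algebra K ℂ] {N : ℕ} {p : K[X]}
    (hp : p.natDegree < N) (n : Fin N) :
    aeval (dftRoot N ^ (n : ℕ)) p =
      Real.sqrt N * (idft N *ᵥ fun m => algebraMap K ℂ (p.coeff m)) n := by
  have hsqrt : (Real.sqrt N : ℂ) ≠ 0 := by simp [n.pos.ne']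
  rw [aeval_eq_sum_range' hp, ← Fin.sum_univ_eq_sum_range (fun m => p.coeff m • _),
    mulVec, dotProduct, Finset.mul_sum]
  refine Finset.sum_congr rfl fun m _ => ?_
  rw [idft, Matrix.of_apply, Algebra.smul_def, pow_mul, ← mul_assoc, ← mul_assoc,
    mul_inv_cancel₀ hsqrt, one_mul, mul_comm]

section RootsOfUnity

variable {K : Type*} [Field K] {N : ℕ}

lemma monic_X_pow_sub_one (hN : N ≠ 0) : (X ^ N - 1 : K[X]).Monic := by
  simpa using monic_X_pow_sub_C (1 : K) hN

variable [Algebra K ℂ]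

lemma aeval_X_pow_sub_one_eq_zero {x : ℂ} (hx : x ^ N = 1) : aeval x (X ^ N - 1 : K[X]) = 0 := by
  simp [hx]

lemma aeval_eq_zero_of_forall_factor_root {ζ : ℂ} {V : Set ℕ} (hN : N ≠ 0)
    (hfactor : ∀ c : K[X], c.Monic → Irreducible c → c ∣ X ^ N - 1 → c ≠ X - 1 →
      ∃ v ∈ V, aeval (ζ ^ v) c = 0)
    {p : K[X]} (hp : ∀ v ∈ V, aeval (ζ ^ v) p = 0) {x : ℂ} (hx : x ^ N = 1) (hx1 : x ≠ 1) :
    aeval x p = 0 := by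
  have hint : IsIntegral K x := ⟨_, monic_X_pow_sub_one hN, aeval_X_pow_sub_one_eq_zero hx⟩
  have hne : minpoly K x ≠ X - 1 := by
    intro h
    have := minpoly.aeval K x
    rw [h, map_sub, aeval_X, map_one, sub_eq_zero] at this
    exact hx1 this
  obtain ⟨v, hv, hroot⟩ := hfactor _ (minpoly.monic hint) (minpoly.irreducible hint)
    (minpoly.dvd K x (aeval_X_pow_sub_one_eq_zero hx)) hne
  have hmin : minpoly K x = minpoly K (ζ ^ v) :=
    minpoly.eq_of_irreducible_of_monic (minpoly.irreducible hint) hroot (minpoly.monic hint)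
  obtain ⟨q, rfl⟩ : minpoly K x ∣ p := hmin ▸ minpoly.dvd K _ (hp v hv)
  rw [map_mul, minpoly.aeval, zero_mul]

lemma exists_aeval_pow_eq_zero_of_irreducible {ζ : ℂ} (hζ : IsPrimitiveRoot ζ N) (hN : N ≠ 0)
    {c : K[X]} (hc : c.Monic) (hirr : Irreducible c) (hdvd : c ∣ X ^ N - 1) (hne : c ≠ X - 1) :
    ∃ k < N, k ≠ 0 ∧ aeval (ζ ^ k) c = 0 := by
  obtain ⟨z, hz⟩ := IsAlgClosed.exists_aeval_eq_zero_of_injective ℂ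
    (algebraMap K ℂ).injective c (degree_pos_of_irreducible hirr).ne'
  have hzN : z ^ N = 1 := by
    obtain ⟨h, hch⟩ := hdvd
    simpa [sub_eq_zero, hz] using congrArg (aeval z) hch
  have : NeZero N := ⟨hN⟩
  obtain ⟨k, hkN, rfl⟩ := hζ.eq_pow_of_pow_eq_one hzN
  refine ⟨k, hkN, ?_, hz⟩
  rintro rfl
  apply hne
  rw [minpoly.eq_of_irreducible_of_monic hirr (by simpa using hz) hc, ← map_one (algebraMap K ℂ),
    minpoly.eq_X_sub_C, map_one]

lemma exists_cofactor_aeval_pow {ζ : ℂ} (hζ : IsPrimitiveRoot ζ N) (hN : N ≠ 0) {V : Set ℕ}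
    {c : K[X]} (hc : c.Monic) (hirr : Irreducible c) (hdvd : c ∣ X ^ N - 1) (hne : c ≠ X - 1)
    (hV : ∀ v ∈ V, aeval (ζ ^ v) c ≠ 0) :
    ∃ h : K[X], h.natDegree < N ∧ (∀ v ∈ V, aeval (ζ ^ v) h = 0) ∧
      ∃ k < N, k ≠ 0 ∧ aeval (ζ ^ k) h ≠ 0 := by
  obtain ⟨k, hkN, hk0, hk⟩ := exists_aeval_pow_eq_zero_of_irreducible hζ hN hc hirr hdvd hne
  obtain ⟨h, hch⟩ := hdvd
  have : CharZero K := (algebraMap K ℂ).charZero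
  have hh0 : h ≠ 0 := by
    rintro rfl
    exact (monic_X_pow_sub_one hN).ne_zero (by rw [hch, mul_zero])
  have hdeg : c.natDegree + h.natDegree = N := by
    rw [← natDegree_mul hc.ne_zero hh0, ← hch]
    simpa using natDegree_X_pow_sub_C (n := N) (r := (1 : K))
  have hcoprime : IsCoprime c h :=
    (hch ▸ X_pow_sub_one_separable_iff.2 (Nat.cast_ne_zero.2 hN) : (c * h).Separable).isCoprime
  refine ⟨h, by linarith [hirr.natDegree_pos], fun v hv => ?_, k, hkN, hk0,
    ((aeval_ne_zero_of_isCoprime hcoprime _).resolve_left (not_not.2 hk))⟩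
  have hvN := aeval_X_pow_sub_one_eq_zero (K := K) (x := ζ ^ v)
    (by rw [pow_right_comm, hζ.pow_eq_one, one_pow])
  rw [hch, map_mul] at hvN
  exact (mul_eq_zero.1 hvN).resolve_left (hV v hv)

end RootsOfUnity

section DFT

variable {K : Type*} [Field K] [Algebra K ℂ] {N : ℕ}

lemma eq_zero_of_dft_mulVec_mem_range (hN : N ≠ 0) {V : Set ℕ} (hV : ∀ n ∈ V, n < N)
    (hfactor : ∀ c : K[X], c.Monic → Irreducible c → c ∣ X ^ N - 1 → c ≠ X - 1 →
      ∃ v ∈ V, aeval (dftRoot N ^ v) c = 0)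
    {d : Fin N → ℂ} (hdK : ∀ m, (dft N *ᵥ d) m ∈ Set.range (algebraMap K ℂ))
    (hdV : ∀ n : Fin N, (n : ℕ) ∈ V → d n = 0) {n : Fin N} (hn : (n : ℕ) ≠ 0) : d n = 0 := by
  classical
  have hζ := isPrimitiveRoot_dftRoot hN
  choose g hg using hdK
  have heval (m : Fin N) : aeval (dftRoot N ^ (m : ℕ)) (ofFn N g) = Real.sqrt N * d m := by
    rw [aeval_dftRoot_pow_eq (ofFn_natDegree_lt (Nat.one_le_iff_ne_zero.2 hN) g)]
    simp only [ofFn_coeff_eq_val_of_lt _ (Fin.isLt _), Fin.eta, hg, idft_mulVec_dft_mulVec hN]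
  have hroot : aeval (dftRoot N ^ (n : ℕ)) (ofFn N g) = 0 := by
    refine aeval_eq_zero_of_forall_factor_root hN hfactor (fun v hv => ?_)
      (by rw [pow_right_comm, hζ.pow_eq_one, one_pow]) (hζ.pow_ne_one_of_pos_of_lt hn n.isLt)
    simpa [hdV ⟨v, hV v hv⟩ hv] using heval ⟨v, hV v hv⟩
  rw [heval] at hroot
  exact (mul_eq_zero.1 hroot).resolve_left (by simp [hN])

lemma exists_dft_mulVec_mem_range (hN : N ≠ 0) {V : Set ℕ} {c : K[X]} (hc : c.Monic)
    (hirr : Irreducible c) (hdvd : c ∣ X ^ N - 1) (hne : c ≠ X - 1)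
    (hV : ∀ v ∈ V, aeval (dftRoot N ^ v) c ≠ 0) :
    ∃ d : Fin N → ℂ, (∀ m, (dft N *ᵥ d) m ∈ Set.range (algebraMap K ℂ)) ∧
      (∀ n : Fin N, (n : ℕ) ∈ V → d n = 0) ∧ ∃ k : Fin N, (k : ℕ) ≠ 0 ∧ d k ≠ 0 := by
  obtain ⟨h, hdeg, hhV, k, hkN, hk0, hk⟩ :=
    exists_cofactor_aeval_pow (isPrimitiveRoot_dftRoot hN) hN hc hirr hdvd hne hV
  have heval := aeval_dftRoot_pow_eq hdeg
  refine ⟨_, fun m => ⟨h.coeff m, by rw [dft_mulVec_idft_mulVec hN]⟩, fun n hn => ?_,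
    ⟨k, hkN⟩, hk0, right_ne_zero_of_mul (heval ⟨k, hkN⟩ ▸ hk)⟩
  have := heval n
  rw [hhV n hn, eq_comm, mul_eq_zero] at this
  exact this.resolve_left (by simp [hN])

end DFT

section GaussianInt

open Complex

lemma IsGaussianInt.mem_adjoin_I {z : ℂ} (hz : IsGaussianInt z) : z ∈ ℚ⟮I⟯ := by
  obtain ⟨a, b, rfl⟩ := hz
  exact add_mem (intCast_mem _ a) (mul_mem (intCast_mem _ b) (mem_adjoin_simple_self ℚ I))

lemma IsGaussianInt.natCast_mul {z : ℂ} (hz : IsGaussianInt z) (r : ℕ) :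
    IsGaussianInt (r * z) := by
  obtain ⟨a, b, rfl⟩ := hz
  exact ⟨r * a, r * b, by push_cast; ring⟩

lemma exists_rat_eq_add_mul_I_of_mem_adjoin {x : ℂ} (hx : x ∈ ℚ⟮I⟯) :
    ∃ a b : ℚ, x = a + b * I := by
  have hI : IsAlgebraic ℚ I := ⟨X ^ 2 + 1, by simpa using X_pow_add_C_ne_zero two_pos (1 : ℚ),
    by simp⟩
  rw [← mem_toSubalgebra, adjoin_simple_toSubalgebra_of_isAlgebraic hI] at hx
  induction hx using Algebra.adjoin_induction with
  | mem y hy => exact ⟨0, 1, by simp [Set.mem_singleton_iff.1 hy]⟩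
  | algebraMap q => exact ⟨q, 0, by simp⟩
  | add y z _ _ hy hz =>
    obtain ⟨a, b, rfl⟩ := hy
    obtain ⟨c, d, rfl⟩ := hz
    exact ⟨a + c, b + d, by push_cast; ring⟩
  | mul y z _ _ hy hz =>
    obtain ⟨a, b, rfl⟩ := hy
    obtain ⟨c, d, rfl⟩ := hz
    exact ⟨a * c - b * d, a * d + b * c, by push_cast; ring_nf; rw [I_sq]; ring⟩

lemma exists_pos_natCast_mul_isGaussianInt {x : ℂ} (hx : x ∈ ℚ⟮I⟯) :
    ∃ r : ℕ, 0 < r ∧ IsGaussianInt (r * x) := by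
  obtain ⟨a, b, rfl⟩ := exists_rat_eq_add_mul_I_of_mem_adjoin hx
  refine ⟨a.den * b.den, Nat.mul_pos a.pos b.pos, b.den * a.num, a.den * b.num, ?_⟩
  have ha : (a.num : ℂ) = a * a.den := by exact_mod_cast a.mul_den_eq_num.symm
  have hb : (b.num : ℂ) = b * b.den := by exact_mod_cast b.mul_den_eq_num.symm
  push_cast
  rw [ha, hb]
  ring

lemma exists_pos_natCast_mul_forall_isGaussianInt {ι : Type*} [Fintype ι] {x : ι → ℂ}
    (hx : ∀ i, x i ∈ ℚ⟮I⟯) : ∃ r : ℕ, 0 < r ∧ ∀ i, IsGaussianInt (r * x i) := by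
  choose r hr hrx using fun i => exists_pos_natCast_mul_isGaussianInt (hx i)
  refine ⟨∏ i, r i, Finset.prod_pos fun i _ => hr i, fun i => ?_⟩
  obtain ⟨t, ht⟩ := Finset.dvd_prod_of_mem r (Finset.mem_univ i)
  simpa [ht, mul_comm (r i), mul_assoc] using (hrx i).natCast_mul t

end GaussianInt

/-- the entries s₁,…,s_{N−1} are uniquely recoverable from the modulo-DFT
measurements iff every monic irreducible factor of X^N − 1 over ℚ(i) other than X − 1
has a root of the form e^{2πin/N} with n ∈ 𝒱. -/
theorem stmt2 (N : ℕ) (hN : 0 < N) (V : Set ℕ) (hV : ∀ n ∈ V, n < N) :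
    (∀ s s' : Fin N → ℂ,
      (∀ n : Fin N, (n : ℕ) ∈ V → s n = 0) →
      (∀ n : Fin N, (n : ℕ) ∈ V → s' n = 0) →
      (∀ m : Fin N, IsGaussianInt ((dft N).mulVec s m - (dft N).mulVec s' m)) →
      ∀ n : Fin N, (n : ℕ) ≠ 0 → s n = s' n) ↔
    (∀ c : Polynomial ℚ⟮Complex.I⟯, c.Monic → Irreducible c → c ∣ (X ^ N - 1) →
      c ≠ X - 1 →
      ∃ n ∈ V, Polynomial.aeval (Complex.exp (2 * Real.pi * Complex.I * n / N)) c = 0) := by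
  simp only [← dftRoot_pow]
  constructor
  · intro hid c hc hirr hdvd hne
    by_contra! hno
    obtain ⟨d, hdK, hdV, k, hk0, hk⟩ := exists_dft_mulVec_mem_range hN.ne' hc hirr hdvd hne hno
    choose g hg using hdK
    obtain ⟨r, hr, hrg⟩ := exists_pos_natCast_mul_forall_isGaussianInt fun m => (g m).2
    have hrd := hid ((r : ℂ) • d) 0 (fun n hn => by simp [hdV n hn]) (fun _ _ => rfl)
      (fun m => by simpa [mulVec_smul, ← hg] using hrg m) k hk0
    exact hk (by simpa [hr.ne'] using hrd)
  · intro hfactor s s' hs hs' hg n hn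
    exact sub_eq_zero.1 (eq_zero_of_dft_mulVec_mem_range (d := s - s') hN.ne' hV hfactor
      (fun m => ⟨⟨_, (hg m).mem_adjoin_I⟩, by simp [mulVec_sub]⟩)
      (fun n hn => by simp [hs n hn, hs' n hn]) hn)
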